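/- Let G be an abelian subgroup of SL_d(ℤ) containing an element whose characteristic polynomial is irreducible over ℚ, and assume in addition that there is no abelian subgroup G₁ of SL_d(ℤ) containing G with rank(G₁) > rank(G) (torsion-free rank). Then the number field K, isomorphism φ, lattice Γ, and conjugating map ψ of the preceding construction can be chosen so that φ(G) is a finite-index subgroup of the full unit group U_K; in particular rank(G) = rank(U_K). -/

import Mathlib

open scoped BigOperators NumberField
open NumberField

noncomputable section

abbrev SLZ (d : ℕ) := Matrix.SpecialLinearGroup (Fin d) ℤ

def intLattice (d : ℕ) : AddSubgroup (EuclideanSpace ℝ (Fin d)) where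
  carrier := {v | ∀ i, ∃ n : ℤ, v i = (n : ℝ)}
  zero_mem' := fun i => ⟨0, by simp⟩
  add_mem' := by
    intro a b ha hb i
    obtain ⟨n, hn⟩ := ha i
    obtain ⟨m, hm⟩ := hb i
    exact ⟨n + m, by push_cast [← hn, ← hm]; rfl⟩
  neg_mem' := by
    intro a ha i
    obtain ⟨n, hn⟩ := ha i
    exact ⟨-n, by push_cast [← hn]; rfl⟩

def matVec {d : ℕ} (A : Matrix (Fin d) (Fin d) ℤ) (v : EuclideanSpace ℝ (Fin d)) :
    EuclideanSpace ℝ (Fin d) := WithLp.toLp 2 (fun i => ∑ j, (A i j : ℝ) * v j)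

def IrreducibleMat {d : ℕ} (A : SLZ d) : Prop :=
  Irreducible (((A : Matrix (Fin d) (Fin d) ℤ).charpoly).map (Int.castRingHom ℚ))

def TotallyIrreducibleMat {d : ℕ} (A : SLZ d) : Prop :=
  ∀ n : ℕ, 0 < n → IrreducibleMat (A ^ n)

/-- The conjugation data of Proposition 2.15: a number field `K` of degree `d`, an isomorphism
`φ` of `G` with a group of units of `K`, a `φ(G)`-invariant lattice `Γ` contained in
`K ⊂ K ⊗_ℚ ℝ ≅ ℝ^{r₁} × ℂ^{r₂}` (the identification being the canonical embedding), and a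
linear conjugation `ψ` between the `G`-action on `ℝ^d` and the multiplication action of
`φ(G)` on `K ⊗_ℚ ℝ`. -/
structure IrredConjData (d : ℕ) (G : Subgroup (SLZ d)) where
  K : Type
  [fieldK : Field K]
  [nfK : NumberField K]
  deg : Module.finrank ℚ K = d
  φ : ↥G →* (𝓞 K)ˣ
  φinj : Function.Injective φ
  Γ : AddSubgroup (NumberField.mixedEmbedding.mixedSpace K)
  ΓinK : ∀ x ∈ Γ, ∃ t : K, NumberField.mixedEmbedding K t = x
  Γinv : ∀ (g : ↥G), ∀ x ∈ Γ,
    NumberField.mixedEmbedding K (algebraMap (𝓞 K) K ((φ g : (𝓞 K)ˣ) : 𝓞 K)) * x ∈ Γ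
  ψ : EuclideanSpace ℝ (Fin d) ≃ₗ[ℝ] NumberField.mixedEmbedding.mixedSpace K
  ψlat : ∀ v : EuclideanSpace ℝ (Fin d), ψ v ∈ Γ ↔ v ∈ intLattice d
  conj : ∀ (g : ↥G) (v : EuclideanSpace ℝ (Fin d)),
    ψ.symm (NumberField.mixedEmbedding K (algebraMap (𝓞 K) K ((φ g : (𝓞 K)ˣ) : 𝓞 K)) * ψ v)
      = matVec ((g : SLZ d) : Matrix (Fin d) (Fin d) ℤ) v

attribute [instance] IrredConjData.fieldK IrredConjData.nfK

/-- A family of elements of a group is multiplicatively independent if no nontrivial integer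
power combination of its members is the identity. -/
def MulIndepFam {H : Type*} [Group H] {k : ℕ} (f : Fin k → H) : Prop :=
  ∀ c : Fin k → ℤ, (List.ofFn fun i => f i ^ c i).prod = 1 → c = 0

/-- The (torsion-free) rank of a subgroup is at least `k`. -/
def RankGE {H : Type*} [Group H] (G : Subgroup H) (k : ℕ) : Prop :=
  ∃ f : Fin k → H, (∀ i, f i ∈ G) ∧ MulIndepFam f

/-!
Let `A ∈ G` have irreducible characteristic polynomial `p` and let `K = ℚ[X]/(p)`. A cyclic
vector identifies `ℚ^d` with `K` so that `A` becomes multiplication by the root of `p`; since the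
root generates `K`, every rational matrix commuting with `A` is multiplication by an element of
`K`. Hence the centralizer `C` of `A` in `SL_d(ℤ)` embeds into `(𝓞 K)ˣ`, is abelian and contains
`G`, and transporting the basis to the mixed space gives the conjugation data. Conversely, if
`m₁ ℤ^d ⊆ 𝓞 K` and `m₂ 𝓞 K ⊆ ℤ^d` inside `K`, every unit congruent to `1` modulo `m₂ m₁` preserves
`ℤ^d`, some power of every unit is such a unit, and the square of its integer matrix lies in
`SL_d(ℤ)` and commutes with `A`. So `C` has the rank of `(𝓞 K)ˣ`, maximality of `G` transfers this
rank to `G`, and a subgroup of full rank of a finitely generated abelian group has finite index.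
-/

section MulIndepFam

variable {G H : Type*} [Group G] [Group H] {k : ℕ}

theorem map_ofFn_prod_zpow (φ : G →* H) (f : Fin k → G) (c : Fin k → ℤ) :
    φ (List.ofFn fun i => f i ^ c i).prod = (List.ofFn fun i => φ (f i) ^ c i).prod := by
  simp [← List.prod_hom _ φ, List.map_ofFn, Function.comp_def]

theorem MulIndepFam.of_comp (φ : G →* H) {f : Fin k → G} (h : MulIndepFam (φ ∘ f)) :
    MulIndepFam f :=
  fun c hc => h c (by simpa [map_ofFn_prod_zpow] using congrArg φ hc)

theorem MulIndepFam.comp (φ : G →* H) (hφ : Function.Injective φ) {f : Fin k → G}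
    (h : MulIndepFam f) : MulIndepFam (φ ∘ f) :=
  fun c hc => h c (hφ (by simpa [map_ofFn_prod_zpow] using hc))

theorem MulIndepFam.pow {f : Fin k → G} (h : MulIndepFam f) {n : Fin k → ℕ}
    (hn : ∀ i, n i ≠ 0) : MulIndepFam fun i => f i ^ n i := by
  intro c hc
  have hnc := h (fun i => n i * c i) (by simpa [← zpow_natCast, ← zpow_mul] using hc)
  funext i
  simpa [hn i] using congrFun hnc i

theorem RankGE.mono {S T : Subgroup G} (hST : S ≤ T) (h : RankGE S k) : RankGE T k :=
  let ⟨f, hfS, hf⟩ := h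
  ⟨f, fun i => hST (hfS i), hf⟩

theorem RankGE.range_of_injective {S : Subgroup G} (φ : S →* H) (hφ : Function.Injective φ)
    (h : RankGE S k) : RankGE φ.range k := by
  obtain ⟨f, hfS, hf⟩ := h
  refine ⟨fun i => φ ⟨f i, hfS i⟩, fun i => ⟨_, rfl⟩, ?_⟩
  exact (MulIndepFam.of_comp S.subtype (f := fun i => ⟨f i, hfS i⟩) hf).comp φ hφ

theorem RankGE.of_pow_mem_range {S : Subgroup G} (φ : S →* H)
    (hφ : ∀ u, ∃ n ≠ 0, u ^ n ∈ φ.range) (h : RankGE (⊤ : Subgroup H) k) : RankGE S k := by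
  obtain ⟨u, -, hu⟩ := h
  choose n hn s hs using hφ
  refine ⟨fun i => s (u i), fun i => (s (u i)).2, ?_⟩
  refine MulIndepFam.comp S.subtype S.subtype_injective (MulIndepFam.of_comp φ ?_)
  simpa [Function.comp_def, hs] using hu.pow fun i => hn (u i)

end MulIndepFam

section CommGroup

variable {U : Type*} [CommGroup U] {k : ℕ}

theorem mulIndepFam_iff_linearIndependent {f : Fin k → U} :
    MulIndepFam f ↔ LinearIndependent ℤ fun i => Additive.ofMul (f i) := by
  simp only [MulIndepFam, List.prod_ofFn, Fintype.linearIndependent_iff, funext_iff,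
    Pi.zero_apply, ← ofMul_zpow, ← ofMul_prod, ofMul_eq_zero]

theorem exists_zpow_mem_of_not_mulIndepFam_snoc {H : Subgroup U} {v : Fin k → U}
    (hvH : ∀ i, v i ∈ H) (hv : MulIndepFam v) {u : U}
    (hu : ¬ MulIndepFam (Fin.snoc (α := fun _ => U) v u)) : ∃ n : ℤ, n ≠ 0 ∧ u ^ n ∈ H := by
  simp only [MulIndepFam, List.prod_ofFn, not_forall] at hu
  obtain ⟨c, hc, hc0⟩ := hu
  rw [Fin.prod_univ_castSucc] at hc
  simp only [Fin.snoc_castSucc, Fin.snoc_last] at hc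
  refine ⟨c (Fin.last k), fun hlast => hc0 ?_, ?_⟩
  · have hinit := hv (fun i => c i.castSucc) (by simpa [List.prod_ofFn, hlast] using hc)
    funext i
    exact Fin.lastCases hlast (fun j => congrFun hinit j) i
  · rw [eq_inv_of_mul_eq_one_right hc]
    exact H.inv_mem (H.prod_mem fun i _ => H.zpow_mem (hvH i) _)

theorem Subgroup.index_ne_zero_of_rankGE [Group.FG U] {H : Subgroup U} {r : ℕ}
    (hH : RankGE H r) (hmax : ¬ RankGE (⊤ : Subgroup U) (r + 1)) : H.index ≠ 0 := by
  obtain ⟨v, hvH, hv⟩ := hH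
  have htors : IsMulTorsion (U ⧸ H) := by
    rintro ⟨u⟩
    obtain ⟨n, hn, hun⟩ := exists_zpow_mem_of_not_mulIndepFam_snoc hvH hv
      fun h => hmax ⟨_, fun _ => Subgroup.mem_top _, h⟩
    exact isOfFinOrder_iff_zpow_eq_one.mpr ⟨n, hn, (QuotientGroup.eq_one_iff _).mpr hun⟩
  have := CommGroup.finite_of_fg_isMulTorsion _ htors
  exact Subgroup.index_ne_zero_of_finite

end CommGroup

namespace NumberField.Units

variable (K : Type*) [Field K] [NumberField K]

instance : Group.FG (𝓞 K)ˣ := Group.fg_iff_monoid_fg.mpr inferInstance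

theorem rankGE_rank : RankGE (⊤ : Subgroup (𝓞 K)ˣ) (rank K) := by
  refine ⟨fundSystem K, fun _ => Subgroup.mem_top _, fun c hc => ?_⟩
  rw [List.prod_ofFn] at hc
  have hrepr := fun_eq_repr K (Subgroup.one_mem _) (by rw [hc, one_mul])
  simpa using hrepr

theorem not_rankGE_rank_succ : ¬ RankGE (⊤ : Subgroup (𝓞 K)ˣ) (rank K + 1) := by
  rintro ⟨f, -, hf⟩
  have hcard := (mulIndepFam_iff_linearIndependent.mp hf).fintype_card_le_finrank
  rw [Fintype.card_fin, finrank_eq] at hcard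
  omega

end NumberField.Units

open Polynomial Module Matrix

section Lattice

variable {ι κ : Type*} [Fintype ι] [Fintype κ]

theorem Module.Basis.exists_zsmul_mem_span {V : Type*} [AddCommGroup V] [Module ℚ V]
    (b : Basis ι ℚ V) (c : Basis κ ℚ V) : ∃ m : ℤ, m ≠ 0 ∧
      ∀ x ∈ Submodule.span ℤ (Set.range b), m • x ∈ Submodule.span ℤ (Set.range c) := by
  obtain ⟨⟨m, hm⟩, hint⟩ := IsLocalization.exist_integer_multiples (nonZeroDivisors ℤ) (S := ℚ)
    Finset.univ fun p : ι × κ => c.repr (b p.1) p.2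
  refine ⟨m, nonZeroDivisors.ne_zero hm, fun x hx => ?_⟩
  suffices Submodule.span ℤ (Set.range b) ≤
      (Submodule.span ℤ (Set.range c)).comap (m • LinearMap.id) from this hx
  refine Submodule.span_le.mpr ?_
  rintro _ ⟨i, rfl⟩
  refine (c.mem_span_iff_repr_mem ℤ _).mpr fun j => ?_
  obtain ⟨n, hn⟩ := hint (i, j) (Finset.mem_univ _)
  exact ⟨n, by simpa using hn⟩

theorem Ideal.exists_pow_sub_one_mem {R : Type*} [CommRing R] (I : Ideal R) [Finite (R ⧸ I)]
    (u : Rˣ) : ∃ n ≠ 0, ((u ^ n : Rˣ) : R) - 1 ∈ I ∧ (((u ^ n)⁻¹ : Rˣ) : R) - 1 ∈ I := by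
  let π := Units.map (Ideal.Quotient.mk I : R →* R ⧸ I)
  have hker : ∀ v : Rˣ, π v = 1 → (v : R) - 1 ∈ I := fun v hv =>
    Ideal.Quotient.eq.mp (by simpa [π, Units.ext_iff] using hv)
  have hpow : π (u ^ orderOf (π u)) = 1 := by rw [map_pow, pow_orderOf_eq_one]
  exact ⟨_, (orderOf_pos (π u)).ne', hker _ hpow, hker _ (by rw [map_inv, hpow, inv_one])⟩

theorem NumberField.exists_ideal_mul_mem_span {K : Type*} [Field K] [NumberField K]
    (b : Basis ι ℚ K) : ∃ I : Ideal (𝓞 K), I ≠ ⊥ ∧ ∀ w : 𝓞 K, w - 1 ∈ I →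
      ∀ x ∈ Submodule.span ℤ (Set.range b),
        algebraMap (𝓞 K) K w * x ∈ Submodule.span ℤ (Set.range b) := by
  obtain ⟨m₁, hm₁, hbO⟩ := b.exists_zsmul_mem_span (integralBasis K)
  obtain ⟨m₂, hm₂, hOb⟩ := (integralBasis K).exists_zsmul_mem_span b
  refine ⟨Ideal.span {((m₂ * m₁ : ℤ) : 𝓞 K)}, by simp [hm₁, hm₂], fun w hw x hx => ?_⟩
  obtain ⟨z, hz⟩ := Ideal.mem_span_singleton'.mp hw
  obtain ⟨y, hy⟩ := (mem_span_integralBasis K).mp (hbO x hx)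
  have hwx : algebraMap (𝓞 K) K w * x = x + m₂ • algebraMap (𝓞 K) K (z * y) := by
    have hz' := congrArg (algebraMap (𝓞 K) K) hz
    simp only [map_mul, map_sub, map_one, map_intCast, Int.cast_mul] at hz'
    rw [zsmul_eq_mul] at hy ⊢
    rw [map_mul, hy]
    linear_combination (-x) * hz'
  rw [hwx]
  exact add_mem hx (hOb _ ((mem_span_integralBasis K).mpr ⟨_, rfl⟩))

end Lattice

section LeftMulMatrix

variable {ι : Type*} [Fintype ι] [DecidableEq ι]

theorem Algebra.exists_basis_leftMulMatrix_eq {F K : Type*} [Field F] [Field K] [Algebra F K]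
    [FiniteDimensional F K] (θ : K →ₐ[F] Matrix ι ι F) (hK : finrank F K = Fintype.card ι) :
    ∃ b : Basis ι F K, Algebra.leftMulMatrix b = θ := by
  obtain ⟨i₀⟩ : Nonempty ι := Fintype.card_pos_iff.mp (hK ▸ finrank_pos)
  let v : ι → F := Pi.single i₀ 1
  let E : K →ₗ[F] ι → F :=
    { toFun x := θ x *ᵥ v
      map_add' x y := by simp [add_mulVec]
      map_smul' c x := by simp [smul_mulVec] }
  have hE_mul : ∀ x y, E (x * y) = θ x *ᵥ E y := fun x y => by simp [E, mulVec_mulVec]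
  -- `v` is a cyclic vector: `E` is injective because every nonzero `x` is invertible.
  have hE : Function.Injective E := by
    refine (injective_iff_map_eq_zero E).mpr fun x hx => by_contra fun hx0 => ?_
    have hv : E (x⁻¹ * x) = v := by simp [hx0, E]
    rw [hE_mul, hx, mulVec_zero] at hv
    simpa [v] using congrFun hv i₀
  let e := LinearMap.linearEquivOfInjective E hE (by simp [hK])
  refine ⟨Basis.ofEquivFun e, AlgHom.ext fun x => Matrix.ext fun i j => ?_⟩
  rw [Algebra.leftMulMatrix_eq_repr_mul, Basis.ofEquivFun_repr_apply, Basis.coe_ofEquivFun]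
  change E _ i = _
  rw [hE_mul]
  change (θ x *ᵥ e (e.symm _)) i = _
  rw [LinearEquiv.apply_symm_apply, mulVec_single_one]
  rfl

theorem Matrix.exists_basis_leftMulMatrix_root_charpoly {F : Type*} [Field F]
    (M : Matrix ι ι F) [Fact (Irreducible M.charpoly)] :
    ∃ b : Basis ι F (AdjoinRoot M.charpoly),
      Algebra.leftMulMatrix b (AdjoinRoot.root M.charpoly) = M := by
  have := M.charpoly_monic.finite_adjoinRoot
  let θ : AdjoinRoot M.charpoly →ₐ[F] Matrix ι ι F :=
    Ideal.Quotient.liftₐ _ (aeval M) fun p hp => by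
      obtain ⟨q, rfl⟩ := Ideal.mem_span_singleton'.mp hp
      simp [aeval_self_charpoly]
  obtain ⟨b, hb⟩ := Algebra.exists_basis_leftMulMatrix_eq θ
    (finrank_quotient_span_eq_natDegree.trans M.charpoly_natDegree_eq_dim)
  exact ⟨b, by rw [hb]; exact aeval_X M⟩

theorem Algebra.exists_leftMulMatrix_eq_of_commute {R S : Type*} [CommRing R] [CommRing S]
    [Algebra R S] (b : Basis ι R S) {x : S} (hx : Algebra.adjoin R {x} = ⊤)
    {N : Matrix ι ι R} (hN : Commute N (Algebra.leftMulMatrix b x)) :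
    ∃ y, Algebra.leftMulMatrix b y = N := by
  have hmat : ∀ y, leftMulMatrix b y = LinearMap.toMatrixAlgEquiv b (lmul R S y) := fun _ => rfl
  let T := Matrix.toLinAlgEquiv b N
  have hTx : Commute T (lmul R S x) := by
    simpa [hmat, T] using hN.map (Matrix.toLinAlgEquiv b).toAlgHom
  have hT : ∀ y, T y = y * T 1 := fun y => by
    have hy : lmul R S y ∈ adjoin R {lmul R S x} := by
      rw [← AlgHom.map_adjoin_singleton, hx]
      exact ⟨y, trivial, rfl⟩
    simpa using LinearMap.congr_fun (commute_of_mem_adjoin_singleton_of_commute hy hTx).eq 1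
  have hlmul : lmul R S (T 1) = T := LinearMap.ext fun y => by simp [hT y, mul_comm]
  exact ⟨T 1, by rw [hmat, hlmul, ← Matrix.toLinAlgEquiv_symm, AlgEquiv.symm_apply_apply]⟩

variable {K : Type*} [CommRing K] [Algebra ℚ K] (b : Basis ι ℚ K)

theorem isIntegral_of_leftMulMatrix_eq {x : K} {M : Matrix ι ι ℤ}
    (h : Algebra.leftMulMatrix b x = (Int.castRingHom ℚ).mapMatrix M) : IsIntegral ℤ x := by
  refine ⟨M.charpoly, M.charpoly_monic, Algebra.leftMulMatrix_injective b ?_⟩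
  rw [← aeval_def, ← aeval_map_algebraMap ℚ, ← aeval_algHom_apply, h, map_zero,
    algebraMap_int_eq, RingHom.mapMatrix_apply, ← charpoly_map, aeval_self_charpoly]

theorem mul_basis_eq_sum_of_leftMulMatrix_eq {x : K} {M : Matrix ι ι ℤ}
    (h : Algebra.leftMulMatrix b x = (Int.castRingHom ℚ).mapMatrix M) (j : ι) :
    x * b j = ∑ i, M i j • b i := by
  conv_lhs => rw [← b.sum_repr (x * b j)]
  refine Finset.sum_congr rfl fun i _ => ?_
  rw [← Algebra.leftMulMatrix_eq_repr_mul, h]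
  simp [Int.cast_smul_eq_zsmul]

theorem exists_leftMulMatrix_eq_of_mul_mem_span {x : K}
    (hx : ∀ y ∈ Submodule.span ℤ (Set.range b), x * y ∈ Submodule.span ℤ (Set.range b)) :
    ∃ M : Matrix ι ι ℤ, Algebra.leftMulMatrix b x = (Int.castRingHom ℚ).mapMatrix M := by
  have hint : ∀ i j, ∃ n : ℤ, (n : ℚ) = Algebra.leftMulMatrix b x i j := fun i j => by
    rw [Algebra.leftMulMatrix_eq_repr_mul]
    exact (b.mem_span_iff_repr_mem ℤ _).mp (hx _ (Submodule.subset_span ⟨j, rfl⟩)) i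
  choose M hM using hint
  exact ⟨M, Matrix.ext fun i j => (hM i j).symm⟩

end LeftMulMatrix

namespace Matrix.SpecialLinearGroup

variable {ι : Type*} [Fintype ι] [DecidableEq ι]

def toRatMatrix : SpecialLinearGroup ι ℤ →* Matrix ι ι ℚ :=
  (Int.castRingHom ℚ).mapMatrix.toMonoidHom.comp coeMonoidHom

theorem toRatMatrix_apply (s : SpecialLinearGroup ι ℤ) :
    toRatMatrix s = (Int.castRingHom ℚ).mapMatrix (s : Matrix ι ι ℤ) := rfl

theorem toRatMatrix_injective : Function.Injective (toRatMatrix (ι := ι)) :=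
  fun _ _ h => Subtype.ext (Matrix.map_injective Int.cast_injective h)

/-- The matrix of `x` lies in `GL(ι, ℤ)`; its square is taken because its determinant may be
`-1`. -/
theorem exists_toRatMatrix_eq_leftMulMatrix_sq {K : Type*} [CommRing K] [Algebra ℚ K]
    (b : Basis ι ℚ K) {x y : K} (hxy : x * y = 1)
    (hx : ∀ z ∈ Submodule.span ℤ (Set.range b), x * z ∈ Submodule.span ℤ (Set.range b))
    (hy : ∀ z ∈ Submodule.span ℤ (Set.range b), y * z ∈ Submodule.span ℤ (Set.range b)) :
    ∃ s : SpecialLinearGroup ι ℤ, toRatMatrix s = Algebra.leftMulMatrix b (x ^ 2) := by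
  obtain ⟨M, hM⟩ := exists_leftMulMatrix_eq_of_mul_mem_span b hx
  obtain ⟨N, hN⟩ := exists_leftMulMatrix_eq_of_mul_mem_span b hy
  have hMN : M * N = 1 := by
    refine Matrix.map_injective (Int.cast_injective (α := ℚ)) ?_
    change (Int.castRingHom ℚ).mapMatrix (M * N) = (Int.castRingHom ℚ).mapMatrix 1
    rw [map_mul, ← hM, ← hN, ← map_mul, hxy, map_one, map_one]
  have hdet : M.det = 1 ∨ M.det = -1 :=
    Int.eq_one_or_neg_one_of_mul_eq_one (by rw [← det_mul, hMN, det_one])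
  refine ⟨⟨M * M, by rcases hdet with h | h <;> simp [h]⟩, ?_⟩
  change (Int.castRingHom ℚ).mapMatrix (M * M) = _
  rw [pow_two, map_mul, map_mul, hM]

variable (A : SpecialLinearGroup ι ℤ) [Fact (Irreducible (toRatMatrix A).charpoly)]

abbrev CharpolyField : Type := AdjoinRoot (toRatMatrix A).charpoly

def charpolyBasis : Basis ι ℚ (CharpolyField A) :=
  (exists_basis_leftMulMatrix_root_charpoly (toRatMatrix A)).choose

theorem leftMulMatrix_charpolyBasis_root :
    Algebra.leftMulMatrix (charpolyBasis A) (AdjoinRoot.root _) = toRatMatrix A :=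
  (exists_basis_leftMulMatrix_root_charpoly (toRatMatrix A)).choose_spec

/-- `AdjoinRoot.adjoinRoot_eq_top` for the instance `DivisionRing.toRatAlgebra` that is found on
`CharpolyField A`; it agrees with `AdjoinRoot.instAlgebra` only up to default transparency. -/
theorem adjoin_root_eq_top : Algebra.adjoin ℚ {AdjoinRoot.root (toRatMatrix A).charpoly} =
    (⊤ : Subalgebra ℚ (CharpolyField A)) :=
  AdjoinRoot.adjoinRoot_eq_top

theorem exists_leftMulMatrix_charpolyBasis_eq (s : Subgroup.centralizer {A}) :
    ∃ y, Algebra.leftMulMatrix (charpolyBasis A) y = toRatMatrix (s : SpecialLinearGroup ι ℤ) := by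
  refine Algebra.exists_leftMulMatrix_eq_of_commute _ (adjoin_root_eq_top A) ?_
  rw [leftMulMatrix_charpolyBasis_root A, commute_iff_eq, ← map_mul, ← map_mul,
    Subgroup.mem_centralizer_singleton_iff.mp s.2]

def centralizerToField : Subgroup.centralizer {A} →* CharpolyField A where
  toFun s := (exists_leftMulMatrix_charpolyBasis_eq A s).choose
  map_one' := Algebra.leftMulMatrix_injective (charpolyBasis A) <| by
    rw [(exists_leftMulMatrix_charpolyBasis_eq A 1).choose_spec, map_one, OneMemClass.coe_one,
      map_one]
  map_mul' s t := Algebra.leftMulMatrix_injective (charpolyBasis A) <| by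
    rw [(exists_leftMulMatrix_charpolyBasis_eq A _).choose_spec, map_mul,
      (exists_leftMulMatrix_charpolyBasis_eq A s).choose_spec,
      (exists_leftMulMatrix_charpolyBasis_eq A t).choose_spec, Subgroup.coe_mul, map_mul]

theorem leftMulMatrix_centralizerToField (s : Subgroup.centralizer {A}) :
    Algebra.leftMulMatrix (charpolyBasis A) (centralizerToField A s) =
      toRatMatrix (s : SpecialLinearGroup ι ℤ) :=
  (exists_leftMulMatrix_charpolyBasis_eq A s).choose_spec

def centralizerToUnits : Subgroup.centralizer {A} →* (𝓞 (CharpolyField A))ˣ :=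
  MonoidHom.toHomUnits
    { toFun s := ⟨centralizerToField A s,
        isIntegral_of_leftMulMatrix_eq _ (leftMulMatrix_centralizerToField A s)⟩
      map_one' := RingOfIntegers.ext (map_one (centralizerToField A))
      map_mul' s t := RingOfIntegers.ext (map_mul (centralizerToField A) s t) }

theorem leftMulMatrix_centralizerToUnits (s : Subgroup.centralizer {A}) :
    Algebra.leftMulMatrix (charpolyBasis A)
        (algebraMap (𝓞 (CharpolyField A)) _ (centralizerToUnits A s : (𝓞 (CharpolyField A))ˣ)) =
      toRatMatrix (s : SpecialLinearGroup ι ℤ) :=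
  leftMulMatrix_centralizerToField A s

theorem centralizerToUnits_injective : Function.Injective (centralizerToUnits A) :=
  fun s t h => Subtype.ext <| toRatMatrix_injective <| by
    rw [← leftMulMatrix_centralizerToUnits, h, leftMulMatrix_centralizerToUnits]

theorem centralizerToUnits_eq_of_toRatMatrix_eq {s : Subgroup.centralizer {A}}
    {u : (𝓞 (CharpolyField A))ˣ} (h : toRatMatrix (s : SpecialLinearGroup ι ℤ) =
      Algebra.leftMulMatrix (charpolyBasis A) (algebraMap (𝓞 (CharpolyField A)) _ u)) :
    centralizerToUnits A s = u :=
  Units.ext <| RingOfIntegers.ext <| Algebra.leftMulMatrix_injective (charpolyBasis A) <|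
    (leftMulMatrix_centralizerToUnits A s).trans h

theorem mul_comm_of_mem_centralizer {s t : SpecialLinearGroup ι ℤ}
    (hs : s ∈ Subgroup.centralizer {A}) (ht : t ∈ Subgroup.centralizer {A}) : s * t = t * s :=
  congrArg Subtype.val <| centralizerToUnits_injective A (a₁ := ⟨s, hs⟩ * ⟨t, ht⟩)
    (a₂ := ⟨t, ht⟩ * ⟨s, hs⟩) (by rw [map_mul, map_mul, mul_comm])

theorem exists_pow_mem_range_centralizerToUnits (u : (𝓞 (CharpolyField A))ˣ) :
    ∃ n ≠ 0, u ^ n ∈ (centralizerToUnits A).range := by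
  obtain ⟨I, hI, hstab⟩ := NumberField.exists_ideal_mul_mem_span (charpolyBasis A)
  have := Ideal.finiteQuotientOfFreeOfNeBot I hI
  obtain ⟨n, hn, hu, hu'⟩ := I.exists_pow_sub_one_mem u
  obtain ⟨s, hs⟩ := exists_toRatMatrix_eq_leftMulMatrix_sq (charpolyBasis A)
    (by rw [← map_mul, Units.mul_inv, map_one]) (hstab _ hu) (hstab _ hu')
  have hsA : s ∈ Subgroup.centralizer {A} := by
    rw [Subgroup.mem_centralizer_singleton_iff]
    have hcomm := (Commute.all (AdjoinRoot.root _ : CharpolyField A)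
      (algebraMap (𝓞 (CharpolyField A)) _ (u ^ n : (𝓞 _)ˣ) ^ 2)).map
        (Algebra.leftMulMatrix (charpolyBasis A))
    rw [leftMulMatrix_charpolyBasis_root A, ← hs] at hcomm
    exact toRatMatrix_injective (by rw [map_mul, map_mul, hcomm.eq])
  refine ⟨n * 2, by positivity, ⟨s, hsA⟩, centralizerToUnits_eq_of_toRatMatrix_eq A ?_⟩
  simp only [hs, pow_mul, Units.val_pow_eq_pow_val, map_pow]

end Matrix.SpecialLinearGroup

namespace NumberField.mixedEmbedding

variable {ι : Type*} [Fintype ι] {K : Type*} [Field K] [NumberField K] (b : Basis ι ℚ K)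

theorem mem_span_range_comp_basis (x : K) :
    mixedEmbedding K x ∈ Submodule.span ℝ (Set.range (mixedEmbedding K ∘ b)) := by
  rw [← b.sum_repr x, map_sum]
  refine Submodule.sum_mem _ fun i _ => ?_
  rw [map_rat_smul, ← Rat.cast_smul_eq_qsmul ℝ]
  exact Submodule.smul_mem _ _ (Submodule.subset_span ⟨i, rfl⟩)

def basisOfRatBasis : Basis ι ℝ (mixedSpace K) :=
  basisOfTopLeSpanOfCardEqFinrank (mixedEmbedding K ∘ b)
    (by
      rw [← (latticeBasis K).span_eq, Submodule.span_le]
      rintro _ ⟨i, rfl⟩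
      rw [latticeBasis_apply]
      exact mem_span_range_comp_basis b _)
    (by rw [mixedEmbedding.finrank, finrank_eq_card_basis b])

def euclideanEquiv : EuclideanSpace ℝ ι ≃ₗ[ℝ] mixedSpace K :=
  WithLp.linearEquiv 2 ℝ (ι → ℝ) ≪≫ₗ (basisOfRatBasis b).equivFun.symm

theorem euclideanEquiv_apply (v : EuclideanSpace ℝ ι) :
    euclideanEquiv b v = ∑ i, v i • mixedEmbedding K (b i) := by
  simp [euclideanEquiv, basisOfRatBasis]

theorem euclideanEquiv_intCast (n : ι → ℤ) :
    euclideanEquiv b (WithLp.toLp 2 fun i => (n i : ℝ)) = mixedEmbedding K (∑ i, n i • b i) := by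
  simp [euclideanEquiv_apply, Int.cast_smul_eq_zsmul]

theorem mixedEmbedding_mul_euclideanEquiv [DecidableEq ι] {x : K} {M : Matrix ι ι ℤ}
    (hx : Algebra.leftMulMatrix b x = (Int.castRingHom ℚ).mapMatrix M) (v : EuclideanSpace ℝ ι) :
    mixedEmbedding K x * euclideanEquiv b v =
      euclideanEquiv b (toLpLin 2 2 (M.map (Int.cast : ℤ → ℝ)) v) := by
  simp only [euclideanEquiv_apply, Finset.mul_sum, mul_smul_comm, ← map_mul,
    mul_basis_eq_sum_of_leftMulMatrix_eq b hx, map_sum, map_zsmul, Finset.smul_sum,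
    toLpLin_apply]
  simp [mulVec, dotProduct, Finset.sum_smul, smul_smul, ← Int.cast_smul_eq_zsmul ℝ, mul_comm]
  exact Finset.sum_comm

end NumberField.mixedEmbedding

theorem matVec_mem_intLattice {d : ℕ} (M : Matrix (Fin d) (Fin d) ℤ)
    {v : EuclideanSpace ℝ (Fin d)} (hv : v ∈ intLattice d) : matVec M v ∈ intLattice d := by
  intro i
  choose n hn using hv
  exact ⟨∑ j, M i j * n j, by simp [matVec, hn]⟩

open Matrix.SpecialLinearGroup NumberField.mixedEmbedding

theorem mixedEmbedding_centralizerToUnits_mul {d : ℕ} (A : SLZ d)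
    [Fact (Irreducible (toRatMatrix A).charpoly)] (s : Subgroup.centralizer {A})
    (v : EuclideanSpace ℝ (Fin d)) :
    mixedEmbedding _ (algebraMap (𝓞 (CharpolyField A)) _ (centralizerToUnits A s : _)) *
        euclideanEquiv (charpolyBasis A) v =
      euclideanEquiv (charpolyBasis A) (matVec ((s : SLZ d) : Matrix (Fin d) (Fin d) ℤ) v) :=
  mixedEmbedding_mul_euclideanEquiv _
    (by rw [leftMulMatrix_centralizerToUnits, toRatMatrix_apply]) v

def IrredConjData.ofCentralizer {d : ℕ} (A : SLZ d) [Fact (Irreducible (toRatMatrix A).charpoly)]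
    {G : Subgroup (SLZ d)} (hG : G ≤ Subgroup.centralizer {A}) : IrredConjData d G where
  K := CharpolyField A
  deg := by rw [finrank_eq_card_basis (charpolyBasis A), Fintype.card_fin]
  φ := (centralizerToUnits A).comp (Subgroup.inclusion hG)
  φinj := (centralizerToUnits_injective A).comp (Subgroup.inclusion_injective hG)
  Γ := (intLattice d).map (euclideanEquiv (charpolyBasis A)).toAddMonoidHom
  ΓinK := by
    rintro _ ⟨v, hv, rfl⟩
    choose n hn using hv
    obtain rfl : v = WithLp.toLp 2 fun i => (n i : ℝ) := by ext i; exact hn i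
    exact ⟨_, (euclideanEquiv_intCast _ n).symm⟩
  Γinv := by
    rintro g _ ⟨v, hv, rfl⟩
    exact ⟨_, matVec_mem_intLattice _ hv, (mixedEmbedding_centralizerToUnits_mul A _ v).symm⟩
  ψ := euclideanEquiv (charpolyBasis A)
  ψlat v := ⟨fun ⟨w, hw, hwv⟩ => (euclideanEquiv _).injective hwv ▸ hw, fun hv => ⟨v, hv, rfl⟩⟩
  conj g v := (euclideanEquiv _).symm_apply_eq.mpr
    (mixedEmbedding_centralizerToUnits_mul A (Subgroup.inclusion hG g) v)

/-- **Maximal rank forces finite index in the full unit group**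
(Proposition 2.16 of the paper). If `G ≤ SL_d(ℤ)` is abelian, contains an irreducible
element, and is maximal in rank among abelian subgroups of `SL_d(ℤ)`, then the data of the
preceding construction can be chosen so that `φ(G)` has finite index in `U_K`; in particular
`rank G = rank U_K`. -/
theorem finite_index_of_maximal_rank (d : ℕ) (G : Subgroup (SLZ d))
    (hab : ∀ a ∈ G, ∀ b ∈ G, a * b = b * a)
    (hirr : ∃ g ∈ G, IrreducibleMat g)
    (hmax : ∀ G₁ : Subgroup (SLZ d), G ≤ G₁ → (∀ a ∈ G₁, ∀ b ∈ G₁, a * b = b * a) →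
      ∀ k : ℕ, RankGE G₁ k → RankGE G k) :
    ∃ S : IrredConjData d G, S.φ.range.index ≠ 0 ∧
      ∀ k : ℕ, RankGE (⊤ : Subgroup (𝓞 S.K)ˣ) k ↔ RankGE G k := by
  obtain ⟨A, hAG, hA⟩ := hirr
  have : Fact (Irreducible (toRatMatrix A).charpoly) :=
    ⟨by rwa [toRatMatrix_apply, RingHom.mapMatrix_apply, charpoly_map]⟩
  have hGC : G ≤ Subgroup.centralizer {A} := fun g hg =>
    Subgroup.mem_centralizer_singleton_iff.mpr (hab g hg A hAG)
  let S := IrredConjData.ofCentralizer A hGC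
  have hrank : ∀ k, RankGE (⊤ : Subgroup (𝓞 S.K)ˣ) k ↔ RankGE G k := fun k =>
    ⟨fun h => hmax _ hGC (fun _ ha _ hb => mul_comm_of_mem_centralizer A ha hb) k
        (h.of_pow_mem_range _ (exists_pow_mem_range_centralizerToUnits A)),
      fun h => (h.range_of_injective S.φ S.φinj).mono le_top⟩
  refine ⟨S, Subgroup.index_ne_zero_of_rankGE ?_ (Units.not_rankGE_rank_succ S.K), hrank⟩
  exact ((hrank _).mp (Units.rankGE_rank S.K)).range_of_injective S.φ S.φinj
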